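/- arXiv:1306.1339 — 2 statements merged into one kernel-verified Lean document; each statement's English description precedes it below -/
import Mathlib

section
/- For a non-constant binary character c on a taxon set X whose bipartition has blocks of sizes a <= b (a + b = n), the maximum of the parsimony score s(c, T) over all binary phylogenetic X-trees T equals a, the size of the smaller block. -/
/-- An X-tree: a finite tree whose leaves are labelled by the taxa in `X`. -/
structure XTree (X : Type) where
  V : Type
  G : SimpleGraph V
  finV : Finite V
  isTree : G.IsTree
  leaf : X → V
  leaf_inj : Function.Injective leaf
  leaf_deg : ∀ x, (G.neighborSet (leaf x)).ncard ≤ 1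
  labeled : ∀ v : V, (G.neighborSet v).ncard ≤ 2 → v ∈ Set.range leaf

namespace XTree

variable {X : Type}

/-- `f` is an extension of the character `c` to all vertices of `T`. -/
def Extends (T : XTree X) (c : X → Bool) (f : T.V → Bool) : Prop :=
  ∀ x, f (T.leaf x) = c x

/-- The set of bichromatic (state-changing) edges of `T` under the extension `f`. -/
def changedEdges (T : XTree X) (f : T.V → Bool) : Set (Sym2 T.V) :=
  {e | e ∈ T.G.edgeSet ∧ ¬ (Sym2.map f e).IsDiag}

/-- The parsimony score `s(c,T)`: the minimum number of bichromatic edges over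
all extensions of `c` to the vertices of `T`. -/
noncomputable def score (T : XTree X) (c : X → Bool) : ℕ :=
  sInf {m | ∃ f : T.V → Bool, T.Extends c f ∧ m = (T.changedEdges f).ncard}

/-- A most parsimonious extension of `c` on `T`. -/
def IsMPExtension (T : XTree X) (c : X → Bool) (f : T.V → Bool) : Prop :=
  T.Extends c f ∧ (T.changedEdges f).ncard = T.score c

/-- `S(D,T)`: the total parsimony score of a sequence of characters. -/
noncomputable def totalScore {k : ℕ} (T : XTree X) (D : Fin k → X → Bool) : ℕ :=
  ∑ i, T.score (D i)

/-- Two X-trees are equivalent if there is a graph isomorphism between them that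
commutes with the leaf labellings. -/
def Equiv (T T' : XTree X) : Prop :=
  ∃ φ : T.G ≃g T'.G, ∀ x, φ (T.leaf x) = T'.leaf x

/-- `T` is the uniquely most parsimonious tree for `D`: every X-tree not
equivalent to `T` has strictly larger total parsimony score. -/
def UniquelyMostParsimonious {k : ℕ} (T : XTree X) (D : Fin k → X → Bool) : Prop :=
  ∀ T' : XTree X, ¬ T.Equiv T' → T.totalScore D < T'.totalScore D

/-- A vertex is a leaf vertex if it is the label of some taxon. -/
def IsLeafVertex (T : XTree X) (v : T.V) : Prop := v ∈ Set.range T.leaf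

/-- A binary phylogenetic tree: leaves have degree 1 and every internal vertex
has degree 3. -/
def IsBinary (T : XTree X) : Prop :=
  (∀ v, T.IsLeafVertex v → (T.G.neighborSet v).ncard = 1) ∧
  (∀ v, ¬ T.IsLeafVertex v → (T.G.neighborSet v).ncard = 3)

/-- `T'` is obtained from `T` by contracting the edge `{u,v}`. -/
def IsContraction (T T' : XTree X) (u v : T.V) : Prop :=
  T.G.Adj u v ∧
  ∃ q : T.V → T'.V, Function.Surjective q ∧
    (∀ x, q (T.leaf x) = T'.leaf x) ∧
    q u = q v ∧
    (∀ a b : T.V, q a = q b → a = b ∨ (a = u ∧ b = v) ∨ (a = v ∧ b = u)) ∧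
    (∀ a b : T.V, T'.G.Adj (q a) (q b) ↔ (T.G.Adj a b ∧ q a ≠ q b))

end XTree

/-- A character is non-constant if it takes both states. -/
def NonConstant {X : Type} (c : X → Bool) : Prop := ∃ x y : X, c x ≠ c y

/-- `H(D)`: the minimum homoplasy score over all X-trees (for binary
non-constant characters, `H(D,T) = S(D,T) - k`). -/
noncomputable def minHomoplasy {k : ℕ} (X : Type) (D : Fin k → X → Bool) : ℕ :=
  sInf {m | ∃ T : XTree X, m = T.totalScore D - k}

/-! Every bichromatic edge of the extension that colours only the `a` true leaves `true` is the
unique edge at a true leaf, so `s(c, T) ≤ a` on every tree. Conversely, on a caterpillar whose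
leaves, read along the spine, begin with `a` pairs (true, false), the paths joining the two leaves
of each pair are vertex-disjoint and each carries a bichromatic edge, so `s(c, T) ≥ a`. -/

open SimpleGraph

theorem Relation.ReflTransGen.exists_rel_apply_ne {α β : Type*} {r : α → α → Prop} {f : α → β}
    {a b : α} (h : Relation.ReflTransGen r a b) (hab : f a ≠ f b) :
    ∃ x y, r x y ∧ f x ≠ f y := by
  induction h with
  | refl => exact absurd rfl hab
  | @tail b c _ hbc ih =>
    by_cases hb : f a = f b
    · exact ⟨b, c, hbc, hb ▸ hab⟩
    · exact ih hb

theorem exists_equiv_forall_iff_of_card_eq {α β : Type*} [Finite α] [Finite β]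
    (p : α → Prop) (q : β → Prop) (h : Nat.card α = Nat.card β)
    (hpq : Nat.card {x // p x} = Nat.card {y // q y}) :
    ∃ e : α ≃ β, ∀ x, p x ↔ q (e x) := by
  classical
  have := Fintype.ofFinite α
  have := Fintype.ofFinite β
  simp only [Nat.card_eq_fintype_card] at h hpq
  have hpq' : Fintype.card {x // ¬ p x} = Fintype.card {y // ¬ q y} := by
    rw [Fintype.card_subtype_compl, Fintype.card_subtype_compl, h, hpq]
  refine ⟨(Equiv.sumCompl p).symm.trans (((Fintype.equivOfCardEq hpq).sumCongr
    (Fintype.equivOfCardEq hpq')).trans (Equiv.sumCompl q)), fun x => ?_⟩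
  by_cases hx : p x
  · simpa [Equiv.sumCompl_symm_apply_of_pos hx, hx] using
      ((Fintype.equivOfCardEq hpq) ⟨x, hx⟩).2
  · simpa [Equiv.sumCompl_symm_apply_of_neg hx, hx] using
      ((Fintype.equivOfCardEq hpq') ⟨x, hx⟩).2

section ParentGraph

variable {V : Type*} (p : V → V)

def parentGraph : SimpleGraph V := fromRel fun u v => p u = v

variable {p} {rank : V → ℕ} {r : V}

theorem parentGraph_adj_parent (hrank : ∀ v ≠ r, rank (p v) < rank v) {v : V} (hv : v ≠ r) :
    (parentGraph p).Adj v (p v) :=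
  (fromRel_adj _ _ _).2 ⟨fun h => (hrank v hv).ne (congrArg rank h).symm, .inl rfl⟩

theorem parentGraph_reachable (hrank : ∀ v ≠ r, rank (p v) < rank v) (v : V) :
    (parentGraph p).Reachable v r := by
  induction hk : rank v using Nat.strong_induction_on generalizing v with
  | _ k ih =>
    by_cases hv : v = r
    · exact hv ▸ .rfl
    · exact (parentGraph_adj_parent hrank hv).reachable.trans
        (ih _ (hk ▸ hrank v hv) _ rfl)

theorem parentGraph_isTree [Finite V] (hr : p r = r) (hrank : ∀ v ≠ r, rank (p v) < rank v) :
    (parentGraph p).IsTree := by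
  classical
  have hne : ∀ v, p v ≠ v → v ≠ r := fun v hv hvr => hv (hvr ▸ hr)
  let edge : {v // v ≠ r} → (parentGraph p).edgeSet := fun v =>
    ⟨s(v, p v), parentGraph_adj_parent hrank v.2⟩
  have hedge : Function.Bijective edge := by
    constructor
    · rintro ⟨v, hv⟩ ⟨w, hw⟩ h
      rcases Sym2.eq_iff.1 (Subtype.ext_iff.1 h) with ⟨h, -⟩ | ⟨hvw, hwv⟩
      · exact Subtype.ext h
      · simp only at hvw hwv
        exact absurd ((hwv ▸ hrank v hv).trans (hvw ▸ hrank w hw)) (lt_irrefl _)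
    · rintro ⟨e, he⟩
      induction e using Sym2.ind with
      | _ u w =>
        obtain ⟨huw, rfl | rfl⟩ := (fromRel_adj _ _ _).1 (mem_edgeSet _ |>.1 he)
        · exact ⟨⟨u, hne u huw.symm⟩, rfl⟩
        · exact ⟨⟨w, hne w huw⟩, Subtype.ext Sym2.eq_swap⟩
  have : Nonempty V := ⟨r⟩
  rw [isTree_iff_connected_and_card]
  refine ⟨.mk fun u v => (parentGraph_reachable hrank u).trans
    (parentGraph_reachable hrank v).symm, ?_⟩
  rw [← Nat.card_congr (Equiv.ofBijective edge hedge), ← Nat.card_congr (Equiv.optionSubtypeNe r)]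
  simp

end ParentGraph

namespace XTree

variable {X : Type} (T : XTree X)

theorem mk_mem_changedEdges {f : T.V → Bool} {u v : T.V} :
    s(u, v) ∈ T.changedEdges f ↔ T.G.Adj u v ∧ f u ≠ f v := by
  simp [changedEdges]

variable (c : X → Bool)

theorem score_le {f : T.V → Bool} (hf : T.Extends c f) : T.score c ≤ (T.changedEdges f).ncard :=
  Nat.sInf_le ⟨f, hf, rfl⟩

theorem le_score {m : ℕ} (h : ∀ f, T.Extends c f → m ≤ (T.changedEdges f).ncard) :
    m ≤ T.score c := by
  obtain ⟨f, hf, hscore⟩ : T.score c ∈ _ :=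
    Nat.sInf_mem ⟨_, _, T.leaf_inj.extend_apply c fun _ => false, rfl⟩
  exact hscore ▸ h f hf

theorem score_le_ncard_true [Finite X] : T.score c ≤ {x | c x = true}.ncard := by
  classical
  have := T.finV
  have := Fintype.ofFinite X
  set f := Function.extend T.leaf c fun _ => false
  have hf : T.Extends c f := T.leaf_inj.extend_apply c _
  have htrue : ∀ v, f v = true → ∃ x : {x // c x = true}, T.leaf x = v := by
    intro v hv
    by_cases h : ∃ x, T.leaf x = v
    · obtain ⟨x, rfl⟩ := h
      exact ⟨⟨x, hf x ▸ hv⟩, rfl⟩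
    · simp [f, Function.extend_apply' _ _ _ h] at hv
  have hsub : T.changedEdges f ⊆ ⋃ x : {x // c x = true}, T.G.incidenceSet (T.leaf x) := by
    intro e he
    induction e using Sym2.ind with
    | _ u v =>
      obtain ⟨huv, hne⟩ := T.mk_mem_changedEdges.1 he
      rcases Bool.eq_false_or_eq_true (f u) with hu | hu
      · obtain ⟨x, rfl⟩ := htrue u hu
        exact Set.mem_iUnion.2 ⟨x, huv, Sym2.mem_mk_left _ _⟩
      · obtain ⟨x, rfl⟩ := htrue v (by simpa [hu] using hne.symm)
        exact Set.mem_iUnion.2 ⟨x, huv, Sym2.mem_mk_right _ _⟩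
  calc T.score c ≤ (T.changedEdges f).ncard := T.score_le c hf
    _ ≤ (⋃ x : {x // c x = true}, T.G.incidenceSet (T.leaf x)).ncard :=
      Set.ncard_le_ncard hsub (Set.toFinite _)
    _ ≤ ∑ x : {x // c x = true}, (T.G.incidenceSet (T.leaf x)).ncard :=
      Set.ncard_iUnion_le_of_fintype _
    _ ≤ ∑ _x : {x // c x = true}, 1 := by
      gcongr with x
      rw [← Nat.card_coe_set_eq, Nat.card_congr (T.G.incidenceSetEquivNeighborSet _),
        Nat.card_coe_set_eq]
      exact T.leaf_deg x
    _ = {x | c x = true}.ncard := by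
      rw [Finset.sum_const, smul_eq_mul, mul_one, Finset.card_univ, ← Nat.card_eq_fintype_card]
      exact Nat.card_coe_set_eq _

theorem card_le_ncard_changedEdges {ι : Type*} (f : T.V → Bool) (key : T.V → ι) (s : Finset ι)
    (h : ∀ i ∈ s, ∃ u v, f u ≠ f v ∧
      Relation.ReflTransGen (fun x y => T.G.Adj x y ∧ key x = i ∧ key y = i) u v) :
    s.card ≤ (T.changedEdges f).ncard := by
  have := T.finV
  have := T.isTree.connected.nonempty
  choose! x y hxy hne using fun i hi =>
    have ⟨_, _, huv, hconn⟩ := h i hi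
    hconn.exists_rel_apply_ne huv
  rw [← Set.ncard_coe_finset]
  refine Set.ncard_le_ncard_of_injOn (fun i => s(x i, y i))
    (fun i hi => T.mk_mem_changedEdges.2 ⟨(hxy i hi).1, hne i hi⟩) ?_ (Set.toFinite _)
  intro i hi j hj hij
  rcases Sym2.eq_iff.1 hij with ⟨h, -⟩ | ⟨h, -⟩
  · rw [← (hxy i hi).2.1, h, (hxy j hj).2.1]
  · rw [← (hxy i hi).2.1, h, (hxy j hj).2.2]

end XTree

namespace Caterpillar

variable {n : ℕ}

abbrev Vertex (n : ℕ) := Fin n ⊕ Fin (n - 2)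

-- Leaves are `inl j` and the spine is `inr 0, …, inr (n - 3)`; leaf `j` hangs off spine vertex
-- `min (j - 1) (n - 3)`, so both ends of the spine carry two leaves. For `n = 2` there is no
-- spine and `inl 1` hangs off `inl 0`.
def parent : Vertex n → Vertex n
  | .inl j => if h : 3 ≤ n then .inr ⟨min ((j : ℕ) - 1) (n - 3), by omega⟩ else .inl ⟨0, j.pos⟩
  | .inr i => .inr ⟨i - 1, (Nat.sub_le _ _).trans_lt i.isLt⟩

variable (n) in
def graph : SimpleGraph (Vertex n) := parentGraph parent

@[simp]
theorem adj_inl_inr {j : Fin n} {i : Fin (n - 2)} :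
    (graph n).Adj (.inl j) (.inr i) ↔ min ((j : ℕ) - 1) (n - 3) = i := by
  have := i.isLt
  by_cases h3 : 3 ≤ n <;> simp [graph, parentGraph, parent, h3, Fin.ext_iff]
  omega

@[simp]
theorem adj_inr_inl {j : Fin n} {i : Fin (n - 2)} :
    (graph n).Adj (.inr i) (.inl j) ↔ min ((j : ℕ) - 1) (n - 3) = i := by
  rw [adj_comm, adj_inl_inr]

@[simp]
theorem adj_inr_inr {i k : Fin (n - 2)} :
    (graph n).Adj (.inr i) (.inr k) ↔ (i : ℕ) + 1 = k ∨ (k : ℕ) + 1 = i := by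
  simp [graph, parentGraph, parent, Fin.ext_iff]
  omega

@[simp]
theorem adj_inl_inl {j j' : Fin n} :
    (graph n).Adj (.inl j) (.inl j') ↔ n < 3 ∧ j ≠ j' := by
  have := j.isLt
  have := j'.isLt
  by_cases h3 : 3 ≤ n <;> simp [graph, parentGraph, parent, h3, Fin.ext_iff]
  omega

theorem ncard_neighborSet_inl (h2 : 2 ≤ n) (j : Fin n) :
    ((graph n).neighborSet (.inl j)).ncard = 1 := by
  have := j.isLt
  rw [Set.ncard_eq_one]
  by_cases h3 : 3 ≤ n
  · refine ⟨.inr ⟨min ((j : ℕ) - 1) (n - 3), by omega⟩, ?_⟩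
    ext (j' | i) <;> simp [h3, Fin.ext_iff]
    omega
  · refine ⟨.inl ⟨1 - j, by omega⟩, ?_⟩
    ext (j' | i) <;> simp [Fin.ext_iff] <;> omega

theorem ncard_neighborSet_inr (i : Fin (n - 2)) :
    ((graph n).neighborSet (.inr i)).ncard = 3 := by
  have := i.isLt
  rw [Set.ncard_eq_three]
  refine ⟨if (i : ℕ) = 0 then .inl ⟨0, by omega⟩ else .inr ⟨i - 1, by omega⟩, .inl ⟨i + 1, by omega⟩,
    if h : (i : ℕ) = n - 3 then .inl ⟨n - 1, by omega⟩ else .inr ⟨i + 1, by omega⟩,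
    ?_, ?_, ?_, ?_⟩ <;> split_ifs
  all_goals (try ext (j | k)) <;> simp [Fin.ext_iff] <;> omega

def root (h2 : 2 ≤ n) : Vertex n := if h : 3 ≤ n then .inr ⟨0, by omega⟩ else .inl ⟨0, by omega⟩

theorem isTree_graph (h2 : 2 ≤ n) : (graph n).IsTree := by
  refine parentGraph_isTree (r := root h2) (rank := Sum.elim (fun j => n + j) fun i => i) ?_ ?_
  · by_cases h3 : 3 ≤ n <;> simp [root, parent, h3]
  · rintro (j | i) hv <;> by_cases h3 : 3 ≤ n
    all_goals simp [root, parent, h3, Fin.ext_iff] at hv ⊢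
    all_goals omega

def block : Vertex n → ℕ := Sum.elim (fun j => j / 2) fun i => (i + 1) / 2

theorem reflTransGen_block {i : ℕ} (hi : 2 * i + 1 < n) :
    Relation.ReflTransGen (fun x y => (graph n).Adj x y ∧ block x = i ∧ block y = i)
      (.inl ⟨2 * i, by omega⟩) (.inl ⟨2 * i + 1, hi⟩) := by
  by_cases h3 : 3 ≤ n
  · let s : Fin (n - 2) := ⟨min (2 * i - 1) (n - 3), by omega⟩
    let t : Fin (n - 2) := ⟨min (2 * i) (n - 3), by omega⟩
    have hst : Relation.ReflTransGen (fun x y => (graph n).Adj x y ∧ block x = i ∧ block y = i)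
        (.inr s) (.inr t) := by
      by_cases hst : s = t
      · rw [hst]
      · refine .single ⟨?_, ?_, ?_⟩ <;> simp_all [s, t, block, Fin.ext_iff] <;> omega
    refine .head ⟨?_, ?_, ?_⟩ (hst.tail ⟨?_, ?_, ?_⟩) <;> simp [s, t, block] <;> omega
  · refine .single ⟨?_, ?_, ?_⟩ <;> simp [block, Fin.ext_iff] <;> omega

end Caterpillar

namespace XTree

open Caterpillar

variable {X : Type} {n : ℕ}

def caterpillar (h2 : 2 ≤ n) (e : X ≃ Fin n) : XTree X where
  V := Vertex n
  G := graph n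
  finV := inferInstance
  isTree := isTree_graph h2
  leaf x := .inl (e x)
  leaf_inj := Sum.inl_injective.comp e.injective
  leaf_deg x := (ncard_neighborSet_inl h2 _).le
  labeled
    | .inl j, _ => ⟨e.symm j, by simp⟩
    | .inr i, h => absurd (ncard_neighborSet_inr i) (by omega)

theorem caterpillar_isBinary (h2 : 2 ≤ n) (e : X ≃ Fin n) : (caterpillar h2 e).IsBinary := by
  refine ⟨?_, ?_⟩
  · rintro _ ⟨x, rfl⟩
    exact ncard_neighborSet_inl h2 (e x)
  · rintro (j | i) hv
    · exact absurd ⟨e.symm j, by simp [caterpillar]⟩ hv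
    · exact ncard_neighborSet_inr i

theorem le_score_caterpillar (h2 : 2 ≤ n) (e : X ≃ Fin n) (c : X → Bool) {a : ℕ}
    (ha : 2 * a ≤ n) (hc : ∀ x, c x = true ↔ (e x : ℕ) < 2 * a ∧ Even (e x : ℕ)) :
    a ≤ (caterpillar h2 e).score c := by
  refine le_score _ _ fun f hf => ?_
  have hleaf (j : Fin n) : f (.inl j) = true ↔ (j : ℕ) < 2 * a ∧ Even (j : ℕ) := by
    have := hc (e.symm j)
    rw [← hf] at this
    simpa [caterpillar] using this
  have hpair (i : ℕ) (hi : i < a) :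
      f (.inl ⟨2 * i, by omega⟩) ≠ f (.inl ⟨2 * i + 1, by omega⟩) := by
    have h0 := hleaf ⟨2 * i, by omega⟩
    have h1 := hleaf ⟨2 * i + 1, by omega⟩
    simp only [even_two_mul, Nat.not_even_bit1, and_true, and_false, iff_false] at h0 h1
    simp [h0.2 (by omega), h1]
  simpa using (caterpillar h2 e).card_le_ncard_changedEdges f block (Finset.range a)
    fun i hi => ⟨_, _, hpair i (Finset.mem_range.1 hi), reflTransGen_block _⟩

end XTree

theorem exists_equiv_fin_alternating {X : Type} [Finite X] {n a : ℕ} (hn : Nat.card X = n)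
    (c : X → Bool) (ha : {x | c x = true}.ncard = a) (h2a : 2 * a ≤ n) :
    ∃ e : X ≃ Fin n, ∀ x, c x = true ↔ (e x : ℕ) < 2 * a ∧ Even (e x : ℕ) := by
  have hpos : Nat.card {j : Fin n // (j : ℕ) < 2 * a ∧ Even (j : ℕ)} = a := by
    refine (Nat.card_congr ⟨fun j => ⟨j.1 / 2, by have := j.2.1; omega⟩,
      fun i => ⟨⟨2 * i, by omega⟩, by simp, by simp⟩, fun j => ?_, fun i => ?_⟩).trans
      (Nat.card_fin a)
    · exact Subtype.ext (Fin.ext (Nat.two_mul_div_two_of_even j.2.2))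
    · ext
      simp
  exact exists_equiv_forall_iff_of_card_eq _ _ (by simpa using hn)
    ((Nat.card_coe_set_eq _).trans (ha.trans hpos.symm))

theorem stmt12_general {X : Type} [Finite X] {n a b : ℕ} (hn : Nat.card X = n)
    (c : X → Bool)
    (ha : {x | c x = true}.ncard = a)
    (hab : a ≤ b) (hsum : a + b = n) (ha1 : 1 ≤ a) :
    IsGreatest {m | ∃ T : XTree X, T.IsBinary ∧ m = T.score c} a := by
  have h2 : 2 ≤ n := by omega
  obtain ⟨e, he⟩ := exists_equiv_fin_alternating hn c ha (by omega)
  refine ⟨⟨XTree.caterpillar h2 e, XTree.caterpillar_isBinary h2 e, le_antisymm ?_ ?_⟩, ?_⟩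
  · exact XTree.le_score_caterpillar h2 e c (by omega) he
  · exact ha ▸ (XTree.caterpillar h2 e).score_le_ncard_true c
  · rintro m ⟨T, -, rfl⟩
    exact ha ▸ T.score_le_ncard_true c

/-- for a non-constant binary character `c` whose bipartition has
blocks of sizes `a ≤ b` with `a + b = n`, the maximum of `s(c,T)` over all
binary phylogenetic X-trees equals `a`. -/
theorem stmt12 {X : Type} [Finite X] {n a b : ℕ} (hn : Nat.card X = n)
    (c : X → Bool)
    (ha : {x | c x = true}.ncard = a) (hb : {x | c x = false}.ncard = b)
    (hab : a ≤ b) (hsum : a + b = n) (ha1 : 1 ≤ a) :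
    IsGreatest {m | ∃ T : XTree X, T.IsBinary ∧ m = T.score c} a :=
  stmt12_general hn c ha hab hsum ha1
end

section
/- For any non-constant binary character c on n taxa and any X-tree T, the parsimony score satisfies 1 <= s(c, T) <= floor(n/2). -/
section Aux

lemma exists_changed_adj {V : Type} {G : SimpleGraph V} {f : V → Bool} {u v : V}
    (w : G.Walk u v) (h : f u ≠ f v) : ∃ a b, G.Adj a b ∧ f a ≠ f b := by
  induction w with
  | nil => exact absurd rfl h
  | @cons u x v hadj p ih =>
    by_cases hf : f u = f x
    · exact ih (hf ▸ h)
    · exact ⟨u, x, hadj, hf⟩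

lemma edge_mem_endpoint {V : Type} {G : SimpleGraph V} {e : Sym2 V} {v : V}
    (he : e ∈ G.edgeSet) (hv : v ∈ e) : ∃ w, G.Adj v w ∧ e = s(v, w) := by
  induction e with
  | h a b =>
    rw [SimpleGraph.mem_edgeSet] at he
    rcases Sym2.mem_iff.mp hv with rfl | rfl
    · exact ⟨b, he, rfl⟩
    · exact ⟨a, he.symm, Sym2.eq_swap⟩

lemma score_le_minority {X : Type} (T : XTree X) (c : X → Bool) (b : Bool)
    (x₀ : X) : T.score c ≤ {x | c x ≠ b}.ncard := by
  haveI := T.finV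
  haveI : Finite X := Finite.of_injective T.leaf T.leaf_inj
  -- the extension constant b on internal vertices
  set f : T.V → Bool := Function.extend T.leaf c (fun _ => b) with hf
  have hext : T.Extends c f := fun x => T.leaf_inj.extend_apply c _ x
  have hother : ∀ v : T.V, v ∉ Set.range T.leaf → f v = b := by
    intro v hv
    exact Function.extend_apply' c (fun _ => b) v (by simpa [Set.range] using hv)
  have hmem : (T.changedEdges f).ncard ∈
      {m | ∃ g : T.V → Bool, T.Extends c g ∧ m = (T.changedEdges g).ncard} :=
    ⟨f, hext, rfl⟩
  refine le_trans (Nat.sInf_le hmem) ?_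
  -- each changed edge contains a minority leaf
  have hkey : ∀ e ∈ T.changedEdges f, ∃ x, T.leaf x ∈ e ∧ c x ≠ b := by
    intro e he
    obtain ⟨hE, hD⟩ := he
    induction e with
    | h a a' =>
      have hne : f a ≠ f a' := by
        simpa [Sym2.map_pair_eq, Sym2.mk_isDiag_iff] using hD
      by_cases ha : f a = b
      · have ha' : f a' ≠ b := fun h => hne (ha.trans h.symm)
        have hr : a' ∈ Set.range T.leaf := by
          by_contra hcon; exact ha' (hother a' hcon)
        obtain ⟨x, rfl⟩ := hr
        exact ⟨x, Sym2.mem_mk_right _ _, by rwa [hext x] at ha'⟩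
      · have hr : a ∈ Set.range T.leaf := by
          by_contra hcon; exact ha (hother a hcon)
        obtain ⟨x, rfl⟩ := hr
        exact ⟨x, Sym2.mem_mk_left _ _, by rwa [hext x] at ha⟩
  classical
  set g : Sym2 T.V → X := fun e =>
    if h : ∃ x, T.leaf x ∈ e ∧ c x ≠ b then h.choose else x₀ with hg
  have hmaps : ∀ e ∈ T.changedEdges f, g e ∈ {x | c x ≠ b} := by
    intro e he
    have h := hkey e he
    simp only [hg, dif_pos h]
    exact h.choose_spec.2
  have hleafmem : ∀ e ∈ T.changedEdges f, T.leaf (g e) ∈ e := by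
    intro e he
    have h := hkey e he
    simp only [hg, dif_pos h]
    exact h.choose_spec.1
  have hinj : Set.InjOn g (T.changedEdges f) := by
    intro e1 he1 e2 he2 hge
    obtain ⟨w1, hadj1, he1'⟩ := edge_mem_endpoint he1.1 (hleafmem e1 he1)
    have hm2 := hleafmem e2 he2
    rw [← hge] at hm2
    obtain ⟨w2, hadj2, he2'⟩ := edge_mem_endpoint he2.1 hm2
    by_cases hw : w1 = w2
    · rw [he1', he2', hw]
    · exfalso
      have hsub : ({w1, w2} : Set T.V) ⊆ T.G.neighborSet (T.leaf (g e1)) := by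
        rintro w (rfl | rfl)
        · exact hadj1
        · exact hadj2
      have h2 : ({w1, w2} : Set T.V).ncard = 2 := Set.ncard_pair hw
      have := Set.ncard_le_ncard hsub (Set.toFinite _)
      have := T.leaf_deg (g e1)
      omega
  calc (T.changedEdges f).ncard ≤ {x | c x ≠ b}.ncard :=
        Set.ncard_le_ncard_of_injOn g hmaps hinj (Set.toFinite _)

end Aux


/-- for any non-constant binary character `c` on `n` taxa and any
X-tree `T`, we have `1 ≤ s(c,T) ≤ ⌊n/2⌋`. -/
theorem stmt13 {X : Type} {n : ℕ} (hn : Nat.card X = n)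
    (c : X → Bool) (hc : NonConstant c) (T : XTree X) :
    1 ≤ T.score c ∧ T.score c ≤ n / 2 := by
  
  haveI := T.finV
  haveI : Finite X := Finite.of_injective T.leaf T.leaf_inj
  obtain ⟨x, y, hxy⟩ := hc
  constructor
  · -- lower bound
    have hne : {m | ∃ f : T.V → Bool, T.Extends c f ∧ m = (T.changedEdges f).ncard}.Nonempty := by
      refine ⟨(T.changedEdges (Function.extend T.leaf c (fun _ => false))).ncard,
        Function.extend T.leaf c (fun _ => false),
        fun z => T.leaf_inj.extend_apply c _ z, rfl⟩
    have hmem := Nat.sInf_mem hne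
    obtain ⟨f, hext, heq⟩ := hmem
    have hfne : f (T.leaf x) ≠ f (T.leaf y) := by rw [hext x, hext y]; exact hxy
    obtain ⟨a, b, hadj, hab⟩ := exists_changed_adj
      ((T.isTree.isConnected.preconnected (T.leaf x) (T.leaf y)).some) hfne
    have hne2 : (T.changedEdges f).Nonempty := by
      refine ⟨s(a, b), hadj, ?_⟩
      simpa [Sym2.map_pair_eq, Sym2.mk_isDiag_iff] using hab
    have hpos : 0 < (T.changedEdges f).ncard :=
      (Set.ncard_pos (Set.toFinite _)).mpr hne2
    unfold XTree.score
    omega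
  · -- upper bound
    have hcard : {z | c z ≠ false}.ncard + {z | c z = false}.ncard = n := by
      have := Set.ncard_add_ncard_compl {z | c z ≠ false}
      simpa [hn, Set.compl_setOf] using this
    by_cases h : {z | c z ≠ false}.ncard ≤ n / 2
    · exact le_trans (score_le_minority T c false x) h
    · have h' : {z | c z ≠ true}.ncard ≤ n / 2 := by
        have : {z | c z ≠ true} = {z | c z = false} := by
          ext z; simp
        rw [this]; omega
      exact le_trans (score_le_minority T c true x) h'
end
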